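/- Every connected component of G either contains no vertex coming from A ⊕ C, in which case it is entirely contained in the image of B, or it contains exactly two vertices coming from A ⊕ C. -/
import Mathlib


open Sum

variable {A B C : Type*}

/-- The natural embedding of `A ⊕ B` into `A ⊕ B ⊕ C`. -/
def embAB : A ⊕ B → A ⊕ B ⊕ C
  | inl a => inl a
  | inr b => inr (inl b)

/-- The natural embedding of `B ⊕ C` into `A ⊕ B ⊕ C`. -/
def embBC : B ⊕ C → A ⊕ B ⊕ C
  | inl b => inr (inl b)
  | inr c => inr (inr c)

/-- The natural embedding of `A ⊕ C` into `A ⊕ B ⊕ C`. -/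
def embAC : A ⊕ C → A ⊕ B ⊕ C
  | inl a => inl a
  | inr c => inr (inr c)

/-- The simple graph on `A ⊕ B ⊕ C` whose edges join (the images of) `x` and `f x`
for each `x : A ⊕ B`, and (the images of) `y` and `g y` for each `y : B ⊕ C`. -/
def matchGraph (f : A ⊕ B → A ⊕ B) (g : B ⊕ C → B ⊕ C) :
    SimpleGraph (A ⊕ B ⊕ C) :=
  SimpleGraph.fromRel fun u v =>
    (∃ x : A ⊕ B, u = embAB x ∧ v = embAB (f x)) ∨
    (∃ y : B ⊕ C, u = embBC y ∧ v = embBC (g y))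

namespace Stmt5Aux

def Fmap (f : A ⊕ B → A ⊕ B) : A ⊕ B ⊕ C → A ⊕ B ⊕ C
  | inl a => embAB (f (inl a))
  | inr (inl b) => embAB (f (inr b))
  | inr (inr c) => inr (inr c)

def Gmap (g : B ⊕ C → B ⊕ C) : A ⊕ B ⊕ C → A ⊕ B ⊕ C
  | inl a => inl a
  | inr (inl b) => embBC (g (inl b))
  | inr (inr c) => embBC (g (inr c))

lemma embAB_inj : Function.Injective (embAB : A ⊕ B → A ⊕ B ⊕ C) := by
  intro x y h
  cases x <;> cases y <;> simp_all [embAB]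

lemma embBC_inj : Function.Injective (embBC : B ⊕ C → A ⊕ B ⊕ C) := by
  intro x y h
  cases x <;> cases y <;> simp_all [embBC]

lemma embAC_inj : Function.Injective (embAC : A ⊕ C → A ⊕ B ⊕ C) := by
  intro x y h
  cases x <;> cases y <;> simp_all [embAC]

lemma Fmap_embAB (f : A ⊕ B → A ⊕ B) (x : A ⊕ B) :
    Fmap f (embAB x) = (embAB (f x) : A ⊕ B ⊕ C) := by
  cases x <;> rfl

lemma Gmap_embBC (g : B ⊕ C → B ⊕ C) (y : B ⊕ C) :
    Gmap g (embBC y) = (embBC (g y) : A ⊕ B ⊕ C) := by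
  cases y <;> rfl

lemma Fmap_invol {f : A ⊕ B → A ⊕ B} (hf : f ∘ f = id) :
    ∀ v : A ⊕ B ⊕ C, Fmap f (Fmap f v) = v := by
  have hf2 : ∀ x, f (f x) = x := fun x => congrFun hf x
  intro v
  match v with
  | inl a => show Fmap f (embAB (f (inl a))) = _; rw [Fmap_embAB, hf2]; rfl
  | inr (inl b) => show Fmap f (embAB (f (inr b))) = _; rw [Fmap_embAB, hf2]; rfl
  | inr (inr c) => rfl

lemma Gmap_invol {g : B ⊕ C → B ⊕ C} (hg : g ∘ g = id) :
    ∀ v : A ⊕ B ⊕ C, Gmap g (Gmap g v) = v := by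
  have hg2 : ∀ y, g (g y) = y := fun y => congrFun hg y
  intro v
  match v with
  | inl a => rfl
  | inr (inl b) => show Gmap g (embBC (g (inl b))) = _; rw [Gmap_embBC, hg2]; rfl
  | inr (inr c) => show Gmap g (embBC (g (inr c))) = _; rw [Gmap_embBC, hg2]; rfl

lemma Fmap_fix {f : A ⊕ B → A ⊕ B} (hf' : ∀ x, f x ≠ x) {v : A ⊕ B ⊕ C}
    (h : Fmap f v = v) : ∃ c, v = inr (inr c) := by
  match v with
  | inl a =>
    have h' : embAB (f (inl a)) = (embAB (inl a) : A ⊕ B ⊕ C) := h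
    exact absurd (embAB_inj h') (hf' _)
  | inr (inl b) =>
    have h' : embAB (f (inr b)) = (embAB (inr b) : A ⊕ B ⊕ C) := h
    exact absurd (embAB_inj h') (hf' _)
  | inr (inr c) => exact ⟨c, rfl⟩

lemma Gmap_fix {g : B ⊕ C → B ⊕ C} (hg' : ∀ y, g y ≠ y) {v : A ⊕ B ⊕ C}
    (h : Gmap g v = v) : ∃ a, v = inl a := by
  match v with
  | inl a => exact ⟨a, rfl⟩
  | inr (inl b) =>
    have h' : embBC (g (inl b)) = (embBC (inl b) : A ⊕ B ⊕ C) := h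
    exact absurd (embBC_inj h') (hg' _)
  | inr (inr c) =>
    have h' : embBC (g (inr c)) = (embBC (inr c) : A ⊕ B ⊕ C) := h
    exact absurd (embBC_inj h') (hg' _)

lemma adj_iff {f : A ⊕ B → A ⊕ B} (hf : f ∘ f = id) {g : B ⊕ C → B ⊕ C}
    (hg : g ∘ g = id) {v w : A ⊕ B ⊕ C} :
    (matchGraph f g).Adj v w ↔ v ≠ w ∧ (Fmap f v = w ∨ Gmap g v = w) := by
  have hf2 : ∀ x, f (f x) = x := fun x => congrFun hf x
  have hg2 : ∀ y, g (g y) = y := fun y => congrFun hg y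
  rw [matchGraph, SimpleGraph.fromRel_adj]
  constructor
  · rintro ⟨hne, (⟨x, rfl, rfl⟩ | ⟨y, rfl, rfl⟩) | (⟨x, rfl, rfl⟩ | ⟨y, rfl, rfl⟩)⟩
    · exact ⟨hne, Or.inl (Fmap_embAB f x)⟩
    · exact ⟨hne, Or.inr (Gmap_embBC g y)⟩
    · refine ⟨hne, Or.inl ?_⟩
      rw [Fmap_embAB, hf2]
    · refine ⟨hne, Or.inr ?_⟩
      rw [Gmap_embBC, hg2]
  · rintro ⟨hne, h | h⟩
    · refine ⟨hne, Or.inl (Or.inl ?_)⟩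
      match v with
      | inl a => exact ⟨inl a, rfl, h.symm⟩
      | inr (inl b) => exact ⟨inr b, rfl, h.symm⟩
      | inr (inr c) => exact absurd h hne
    · refine ⟨hne, Or.inl (Or.inr ?_)⟩
      match v with
      | inl a => exact absurd h hne
      | inr (inl b) => exact ⟨inl b, rfl, h.symm⟩
      | inr (inr c) => exact ⟨inr c, rfl, h.symm⟩


variable {V : Type*}

def st (p q : V → V) : Bool → V → V
  | true => p
  | false => q

def Ltr (s : Bool) (n : ℕ) : Bool := if n % 2 = 0 then s else !s

def altSeq (p q : V → V) (s : Bool) (u : V) : ℕ → V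
  | 0 => u
  | n + 1 => st p q (Ltr s n) (altSeq p q s u n)

lemma Ltr_eq (s : Bool) {m n : ℕ} (h : m % 2 = n % 2) : Ltr s m = Ltr s n := by
  simp [Ltr, h]

lemma Ltr_succ (s : Bool) (n : ℕ) : Ltr s (n + 1) = !(Ltr s n) := by
  rcases Nat.mod_two_eq_zero_or_one n with h | h <;>
    simp [Ltr, Nat.add_mod, h]

lemma Ltr_zero (s : Bool) : Ltr s 0 = s := rfl

section
variable {p q : V → V} {s : Bool} {u : V}

lemma st_st (hp : ∀ v, p (p v) = v) (hq : ∀ v, q (q v) = v) (b : Bool) (v : V) :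
    st p q b (st p q b v) = v := by
  cases b <;> simp [st, hp, hq]

lemma altSeq_succ (s : Bool) (u : V) (n : ℕ) :
    altSeq p q s u (n + 1) = st p q (Ltr s n) (altSeq p q s u n) := rfl

lemma altSeq_back (hp : ∀ v, p (p v) = v) (hq : ∀ v, q (q v) = v) (s : Bool) (u : V) (n : ℕ) :
    st p q (Ltr s n) (altSeq p q s u (n + 1)) = altSeq p q s u n := st_st hp hq _ _

lemma altSeq_injOn (hp : ∀ v, p (p v) = v) (hq : ∀ v, q (q v) = v)
    (hu : st p q (!s) u = u) (hu' : st p q s u ≠ u) {N : ℕ}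
    (nostall : ∀ k < N, altSeq p q s u (k + 1) ≠ altSeq p q s u k) :
    ∀ j ≤ N, ∀ i < j, altSeq p q s u i ≠ altSeq p q s u j := by
  intro j
  induction j using Nat.strong_induction_on with
  | _ j IH =>
    intro hjN i hij heq
    obtain ⟨k, rfl⟩ : ∃ k, j = k + 1 := ⟨j - 1, by omega⟩
    have hstep : altSeq p q s u (k + 1) = st p q (Ltr s k) (altSeq p q s u k) := rfl
    cases i with
    | zero =>
      rcases Nat.mod_two_eq_zero_or_one k with hk | hk
      · have hL : Ltr s k = s := by simp [Ltr, hk]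
        have h1 : altSeq p q s u k = st p q s u := by
          have h2 := congrArg (st p q s) heq
          rw [hstep, hL, st_st hp hq] at h2
          exact h2.symm
        rcases Nat.lt_or_ge k 2 with hk2 | hk2
        · interval_cases k
          · exact hu' h1.symm
          · omega
        · have h2 : altSeq p q s u 1 = st p q s u := rfl
          exact IH k (by omega) (by omega) 1 (by omega) (h2.trans h1.symm)
      · have hL : Ltr s k = !s := by simp [Ltr, hk]
        have h1 : altSeq p q s u k = u := by
          have h2 := congrArg (st p q (!s)) heq
          rw [show altSeq p q s u 0 = u from rfl, hu, hstep, hL, st_st hp hq] at h2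
          exact h2.symm
        have hk0 : 0 < k := by omega
        exact IH k (by omega) (by omega) 0 hk0 h1.symm
    | succ i' =>
      by_cases hpar : i' % 2 = k % 2
      · have hL : Ltr s i' = Ltr s k := Ltr_eq s hpar
        have h1 : altSeq p q s u i' = altSeq p q s u k := by
          have h2 := congrArg (st p q (Ltr s i')) heq
          rw [altSeq_back hp hq s u i', hL, altSeq_back hp hq s u k] at h2
          exact h2
        exact IH k (by omega) (by omega) i' (by omega) h1
      · have hL : Ltr s (i' + 1) = Ltr s k := Ltr_eq s (by omega)
        have h1 : altSeq p q s u (i' + 2) = altSeq p q s u k := by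
          have h2 : altSeq p q s u (i' + 2)
              = st p q (Ltr s (i' + 1)) (altSeq p q s u (i' + 1)) := rfl
          rw [h2, heq, hL, altSeq_back hp hq]
        have hle : i' + 2 ≤ k + 1 := by omega
        rcases Nat.lt_trichotomy (i' + 2) k with h3 | h3 | h3
        · exact IH k (by omega) (by omega) (i' + 2) h3 h1
        · omega
        · have hik : i' + 2 = k + 1 := by omega
          rw [hik] at h1
          exact nostall k (by omega) h1

lemma exists_stall [Finite V] (hp : ∀ v, p (p v) = v) (hq : ∀ v, q (q v) = v)
    (hu : st p q (!s) u = u) (hu' : st p q s u ≠ u) :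
    ∃ k, altSeq p q s u (k + 1) = altSeq p q s u k := by
  by_contra h
  push_neg at h
  obtain ⟨i, j, hij, hfij⟩ := Finite.exists_ne_map_eq_of_infinite (altSeq p q s u)
  rcases Nat.lt_or_ge i j with h' | h'
  · exact altSeq_injOn hp hq hu hu' (N := j) (fun k _ => h k) j le_rfl i h' hfij
  · exact altSeq_injOn hp hq hu hu' (N := i) (fun k _ => h k) i le_rfl j
      (by omega) hfij.symm

lemma altSeq_reflect (hp : ∀ v, p (p v) = v) (hq : ∀ v, q (q v) = v) {N : ℕ}
    (hstall : altSeq p q s u (N + 1) = altSeq p q s u N) :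
    ∀ k ≤ N, altSeq p q s u (N + 1 + k) = altSeq p q s u (N - k) := by
  intro k
  induction k with
  | zero => simpa using hstall
  | succ k IHk =>
    intro hk
    have hk' : k ≤ N := by omega
    have h1 : altSeq p q s u (N + 1 + (k + 1))
        = st p q (Ltr s (N + 1 + k)) (altSeq p q s u (N + 1 + k)) := rfl
    rw [IHk hk'] at h1
    have hL : Ltr s (N + 1 + k) = Ltr s (N - k - 1) := Ltr_eq s (by omega)
    have h2 : st p q (Ltr s (N - k - 1)) (altSeq p q s u ((N - k - 1) + 1))
        = altSeq p q s u (N - k - 1) := altSeq_back hp hq s u _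
    have h3 : (N - k - 1) + 1 = N - k := by omega
    rw [h3] at h2
    rw [hL, h2] at h1
    have h4 : N - (k + 1) = N - k - 1 := by omega
    rw [h4]
    exact h1

lemma altSeq_period (hp : ∀ v, p (p v) = v) (hq : ∀ v, q (q v) = v)
    (hu : st p q (!s) u = u) {N : ℕ}
    (hstall : altSeq p q s u (N + 1) = altSeq p q s u N) :
    ∀ m, altSeq p q s u (m + (2 * N + 2)) = altSeq p q s u m := by
  have h2N1 : altSeq p q s u (2 * N + 1) = u := by
    have := altSeq_reflect hp hq hstall N le_rfl
    rw [show N + 1 + N = 2 * N + 1 from by omega, Nat.sub_self] at this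
    exact this
  intro m
  induction m with
  | zero =>
    have e : 0 + (2 * N + 2) = (2 * N + 1) + 1 := by omega
    rw [e, altSeq_succ, h2N1]
    have hL : Ltr s (2 * N + 1) = !s := by simp [Ltr, Nat.add_mod, Nat.mul_mod]
    rw [hL, hu]
    rfl
  | succ m IHm =>
    have e : (m + 1) + (2 * N + 2) = (m + (2 * N + 2)) + 1 := by omega
    rw [e, altSeq_succ, IHm, show Ltr s (m + (2 * N + 2)) = Ltr s m from Ltr_eq s (by omega)]
    rfl

lemma altSeq_reduce (hp : ∀ v, p (p v) = v) (hq : ∀ v, q (q v) = v)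
    (hu : st p q (!s) u = u) {N : ℕ}
    (hstall : altSeq p q s u (N + 1) = altSeq p q s u N) :
    ∀ m, ∃ k ≤ N, altSeq p q s u m = altSeq p q s u k := by
  intro m
  induction m using Nat.strong_induction_on with
  | _ m IHm =>
    rcases Nat.lt_or_ge N m with h1 | h1
    · rcases Nat.lt_or_ge (2 * N + 1) m with h2 | h2
      · obtain ⟨k, hk, hk2⟩ := IHm (m - (2 * N + 2)) (by omega)
        refine ⟨k, hk, ?_⟩
        rw [← hk2]
        have := altSeq_period hp hq hu hstall (m - (2 * N + 2))
        rw [show m - (2 * N + 2) + (2 * N + 2) = m from by omega] at this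
        exact this
      · have := altSeq_reflect hp hq hstall (m - N - 1) (by omega)
        rw [show N + 1 + (m - N - 1) = m from by omega] at this
        exact ⟨N - (m - N - 1), by omega, this⟩
    · exact ⟨m, h1, rfl⟩

lemma altSeq_closed (hp : ∀ v, p (p v) = v) (hq : ∀ v, q (q v) = v)
    (hu : st p q (!s) u = u) (n : ℕ) (b : Bool) :
    ∃ m, st p q b (altSeq p q s u n) = altSeq p q s u m := by
  by_cases hb : b = Ltr s n
  · exact ⟨n + 1, by rw [hb]; rfl⟩
  · cases n with
    | zero =>
      have hbs : b = !s := by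
        have : Ltr s 0 = s := rfl
        rw [this] at hb
        cases b <;> cases s <;> simp_all
      exact ⟨0, by rw [hbs]; exact hu⟩
    | succ n' =>
      have hbs : b = Ltr s n' := by
        rw [Ltr_succ] at hb
        cases b <;> cases hC : Ltr s n' <;> simp_all
      exact ⟨n', by rw [hbs]; exact altSeq_back hp hq s u n'⟩

/-- The core combinatorial lemma: starting from an endpoint `u`, the alternating
walk reaches exactly one other endpoint `u'`, and every endpoint on the walk is
`u` or `u'`. -/
lemma core [Finite V] (hp : ∀ v, p (p v) = v) (hq : ∀ v, q (q v) = v)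
    (hu : st p q (!s) u = u) (hu' : st p q s u ≠ u) :
    ∃ u' : V, u' ≠ u ∧ (p u' = u' ∨ q u' = u') ∧ (∃ n, u' = altSeq p q s u n) ∧
      ∀ n, (p (altSeq p q s u n) = altSeq p q s u n ∨
            q (altSeq p q s u n) = altSeq p q s u n) →
        altSeq p q s u n = u ∨ altSeq p q s u n = u' := by
  have hex := exists_stall hp hq hu hu'
  classical
  set N := Nat.find hex with hN
  have hstall : altSeq p q s u (N + 1) = altSeq p q s u N := Nat.find_spec hex
  have nostall : ∀ k < N, altSeq p q s u (k + 1) ≠ altSeq p q s u k :=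
    fun k hk => Nat.find_min hex hk
  have hNpos : 0 < N := by
    rcases Nat.eq_zero_or_pos N with h0 | h0
    · exfalso
      rw [h0] at hstall
      exact hu' hstall
    · exact h0
  refine ⟨altSeq p q s u N, ?_, ?_, ⟨N, rfl⟩, ?_⟩
  · intro h
    exact altSeq_injOn hp hq hu hu' nostall N le_rfl 0 hNpos h.symm
  · have h1 : st p q (Ltr s N) (altSeq p q s u N) = altSeq p q s u N := by
      rw [← altSeq_succ, hstall]
    cases hLN : Ltr s N
    · right; rw [hLN] at h1; exact h1
    · left; rw [hLN] at h1; exact h1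
  · intro n hend
    obtain ⟨k, hkN, hk⟩ := altSeq_reduce hp hq hu hstall n
    rw [hk] at hend ⊢
    rcases Nat.eq_zero_or_pos k with h0 | h0
    · left; rw [h0]; rfl
    rcases Nat.lt_or_ge k N with hkN' | hkN'
    · exfalso
      have hout : st p q (Ltr s k) (altSeq p q s u k) ≠ altSeq p q s u k := by
        rw [← altSeq_succ]
        exact nostall k hkN'
      have hback : st p q (Ltr s (k - 1)) (altSeq p q s u k) = altSeq p q s u (k - 1) := by
        have := altSeq_back hp hq s u (k - 1)
        rwa [show k - 1 + 1 = k from by omega] at this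
      have hin : st p q (Ltr s (k - 1)) (altSeq p q s u k) ≠ altSeq p q s u k := by
        rw [hback]
        exact fun h => altSeq_injOn hp hq hu hu' nostall k (by omega) (k - 1) (by omega) h
      have hLk : Ltr s k = !(Ltr s (k - 1)) := by
        have := Ltr_succ s (k - 1)
        rwa [show k - 1 + 1 = k from by omega] at this
      rcases hend with h | h
      · cases hL : Ltr s (k - 1)
        · rw [hL] at hLk
          exact hout (by rw [hLk]; exact h)
        · rw [hL] at hin
          exact hin h
      · cases hL : Ltr s (k - 1)
        · rw [hL] at hin
          exact hin h
        · rw [hL] at hLk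
          exact hout (by rw [hLk]; exact h)
    · right
      have : k = N := by omega
      rw [this]

end

lemma reach_iff {f : A ⊕ B → A ⊕ B} (hf : f ∘ f = id) {g : B ⊕ C → B ⊕ C}
    (hg : g ∘ g = id) {s : Bool} {u : A ⊕ B ⊕ C}
    (hu : st (Fmap f) (Gmap g) (!s) u = u) (w : A ⊕ B ⊕ C) :
    (matchGraph f g).Reachable u w ↔ ∃ n, w = altSeq (Fmap f) (Gmap g) s u n := by
  have hp := Fmap_invol (C := C) hf
  have hq := Gmap_invol (A := A) hg
  constructor
  · intro h
    rw [SimpleGraph.reachable_iff_reflTransGen] at h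
    induction h with
    | refl => exact ⟨0, rfl⟩
    | tail hab hbc ih =>
      obtain ⟨n, rfl⟩ := ih
      rcases (adj_iff hf hg).mp hbc with ⟨hne, h | h⟩
      · obtain ⟨m, hm⟩ := altSeq_closed hp hq hu n true
        exact ⟨m, by rw [← h]; exact hm.symm ▸ hm.symm⟩
      · obtain ⟨m, hm⟩ := altSeq_closed hp hq hu n false
        exact ⟨m, by rw [← h]; exact hm.symm ▸ hm.symm⟩
  · rintro ⟨n, rfl⟩
    induction n with
    | zero => exact SimpleGraph.Reachable.refl u
    | succ n ih =>
      by_cases heq : altSeq (Fmap f) (Gmap g) s u (n + 1) = altSeq (Fmap f) (Gmap g) s u n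
      · rw [heq]; exact ih
      · refine ih.trans (SimpleGraph.Adj.reachable ?_)
        refine (adj_iff hf hg).mpr ⟨fun h => heq h.symm, ?_⟩
        cases hL : Ltr s n
        · right
          rw [altSeq_succ, hL]
          rfl
        · left
          rw [altSeq_succ, hL]
          rfl

end Stmt5Aux

open Stmt5Aux in
/-- Every connected component of `G` either contains no vertex coming from `A ⊕ C` —
in which case it is entirely contained in the image of `B` — or it contains exactly
two vertices coming from `A ⊕ C`. -/
theorem stmt5 [Fintype A] [Fintype B] [Fintype C]
    (f : A ⊕ B → A ⊕ B) (hf : f ∘ f = id) (hf' : ∀ x, f x ≠ x)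
    (g : B ⊕ C → B ⊕ C) (hg : g ∘ g = id) (hg' : ∀ y, g y ≠ y) :
    ∀ K : (matchGraph f g).ConnectedComponent,
      ((∀ x : A ⊕ C, embAC x ∉ K.supp) ∧ ∀ v ∈ K.supp, ∃ b : B, v = inr (inl b)) ∨
      {x : A ⊕ C | embAC x ∈ K.supp}.ncard = 2 := by
  intro K
  by_cases hK : ∃ x : A ⊕ C, embAC x ∈ K.supp
  · right
    obtain ⟨x0, hx0⟩ := hK
    have hp := Fmap_invol (C := C) hf
    have hq := Gmap_invol (A := A) hg
    obtain ⟨s, hu, hu'⟩ : ∃ s : Bool,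
        st (Fmap f) (Gmap g) (!s) (embAC x0) = embAC x0 ∧
        st (Fmap f) (Gmap g) s (embAC x0) ≠ embAC x0 := by
      cases x0 with
      | inl a =>
        refine ⟨true, rfl, fun h => ?_⟩
        have h' : Fmap f (embAC (inl a)) = (embAC (inl a) : A ⊕ B ⊕ C) := h
        obtain ⟨c, hc⟩ := Fmap_fix hf' h'
        simp [embAC] at hc
      | inr c =>
        refine ⟨false, rfl, fun h => ?_⟩
        have h' : Gmap g (embAC (inr c)) = (embAC (inr c) : A ⊕ B ⊕ C) := h
        obtain ⟨a, ha⟩ := Gmap_fix hg' h'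
        simp [embAC] at ha
    obtain ⟨u', hne, hend', ⟨N, hN⟩, huniq⟩ := core hp hq hu hu'
    obtain ⟨x1, hx1⟩ : ∃ x1 : A ⊕ C, u' = embAC x1 := by
      rcases hend' with h | h
      · obtain ⟨c, hc⟩ := Fmap_fix hf' h
        exact ⟨inr c, hc⟩
      · obtain ⟨a, ha⟩ := Gmap_fix hg' h
        exact ⟨inl a, ha⟩
    have hKu : (matchGraph f g).connectedComponentMk (embAC x0) = K :=
      (SimpleGraph.ConnectedComponent.mem_supp_iff K (embAC x0)).mp hx0
    have hmem : ∀ w, w ∈ K.supp ↔ (matchGraph f g).Reachable (embAC x0) w := by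
      intro w
      rw [SimpleGraph.ConnectedComponent.mem_supp_iff, ← hKu,
        SimpleGraph.ConnectedComponent.eq]
      exact ⟨SimpleGraph.Reachable.symm, SimpleGraph.Reachable.symm⟩
    have hset : {x : A ⊕ C | embAC x ∈ K.supp} = {x0, x1} := by
      ext x
      simp only [Set.mem_setOf_eq, Set.mem_insert_iff, Set.mem_singleton_iff]
      constructor
      · intro hx
        obtain ⟨n, hn⟩ := (reach_iff hf hg hu _).mp ((hmem _).mp hx)
        have hendx : Fmap f (embAC x) = embAC x ∨ Gmap g (embAC x) = embAC x := by
          cases x with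
          | inl a => right; rfl
          | inr c => left; rfl
        rw [hn] at hendx
        rcases huniq n hendx with h | h
        · left
          exact embAC_inj (hn.trans h)
        · right
          exact embAC_inj (hn.trans (h.trans hx1))
      · rintro (rfl | rfl)
        · exact hx0
        · refine (hmem _).mpr ((reach_iff hf hg hu _).mpr ⟨N, ?_⟩)
          rw [← hx1]
          exact hN
    rw [hset]
    refine Set.ncard_pair fun h => hne ?_
    rw [hx1, ← h]
  · left
    refine ⟨fun x hx => hK ⟨x, hx⟩, fun v hv => ?_⟩
    rcases v with a | b | c
    · exact absurd hv fun h => hK ⟨inl a, h⟩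
    · exact ⟨b, rfl⟩
    · exact absurd hv fun h => hK ⟨inr c, h⟩
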